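/- arXiv:2408.10927 — 2 statements merged into one kernel-verified Lean document; each statement's English description precedes it below -/
import Mathlib

section
/- Let G = (V, E) be a finite graph, R ⊆ V, and A, B ⊆ R disjoint, with a configuration ω : E(R) → {0,1}. Suppose A is not connected to B in R by an ω-open path. Let ∂ᶜA = { e = ⟨x,y⟩ ∈ E(R) : x is connected to A by an open path in R and ω(e) = 0 } be the closed boundary of the open cluster of A. Then there exists a unique minimal closed cutset separating A from B that is contained in ∂ᶜA. (A cutset F is minimal if no proper subset of F is a cutset.) -/
open SimpleGraph

section Aux

variable {V : Type*} (G : SimpleGraph V) (R A B : Set V) (ω : Sym2 V → Bool)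

/-- The open cluster of `A` inside `R`. -/
def stmt3Cl : Set V :=
  {x | ∃ a ∈ A, ∃ w : G.Walk x a, (∀ v ∈ w.support, v ∈ R) ∧ ∀ e ∈ w.edges, ω e = true}

/-- The canonical minimal closed cutset. -/
def stmt3Cut : Set (Sym2 V) :=
  {e | ∃ x y, e = s(x, y) ∧ G.Adj x y ∧ x ∈ stmt3Cl G R A ω ∧ y ∉ stmt3Cl G R A ω ∧
    ∃ b ∈ B, ∃ w : G.Walk y b, ∀ v ∈ w.support, v ∈ R ∧ v ∉ stmt3Cl G R A ω}

lemma stmt3_mem_support {V : Type*} {G : SimpleGraph V} {u v z : V} (p : G.Walk u v)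
    {e : Sym2 V} (he : e ∈ p.edges) (hz : z ∈ e) : z ∈ p.support := by
  induction e with
  | h a b =>
    rw [Sym2.mem_iff] at hz
    rcases hz with rfl | rfl
    · exact p.fst_mem_support_of_mem_edges he
    · exact p.snd_mem_support_of_mem_edges he

end Aux

/-- If `A` is not connected to `B` in `R` by an open path, then there is a unique
minimal closed cutset separating `A` from `B` contained in the closed boundary
`∂ᶜA` of the open cluster of `A`. -/
theorem stmt3 {V : Type*} [Fintype V] (G : SimpleGraph V) (R A B : Set V)
    (hA : A ⊆ R) (hB : B ⊆ R) (hAB : Disjoint A B) (ω : Sym2 V → Bool)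
    (hnc : ¬ ∃ a ∈ A, ∃ b ∈ B, ∃ w : G.Walk a b,
        (∀ v ∈ w.support, v ∈ R) ∧ (∀ e ∈ w.edges, ω e = true)) :
    ∃! F : Set (Sym2 V),
      -- `F` is contained in the closed boundary of the open cluster of `A`
      (F ⊆ {e | e ∈ G.edgeSet ∧ (∀ v ∈ e, v ∈ R) ∧ ω e = false ∧
          ∃ x ∈ e, ∃ a ∈ A, ∃ w : G.Walk x a,
            (∀ v ∈ w.support, v ∈ R) ∧ ∀ e' ∈ w.edges, ω e' = true}) ∧
      -- `F` is a cutset separating `A` from `B` in `R`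
      (∀ a ∈ A, ∀ b ∈ B, ∀ w : G.Walk a b, (∀ v ∈ w.support, v ∈ R) →
        ∃ e ∈ w.edges, e ∈ F) ∧
      -- `F` is minimal: no proper subset is a cutset
      (∀ F' : Set (Sym2 V), F' ⊂ F →
        ¬ (∀ a ∈ A, ∀ b ∈ B, ∀ w : G.Walk a b, (∀ v ∈ w.support, v ∈ R) →
            ∃ e ∈ w.edges, e ∈ F')) := by
  set C : Set V := stmt3Cl G R A ω with hC
  set Fc : Set (Sym2 V) := stmt3Cut G R A B ω with hFc
  set bd : Set (Sym2 V) := {e | e ∈ G.edgeSet ∧ (∀ v ∈ e, v ∈ R) ∧ ω e = false ∧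
      ∃ x ∈ e, ∃ a ∈ A, ∃ w : G.Walk x a,
        (∀ v ∈ w.support, v ∈ R) ∧ ∀ e' ∈ w.edges, ω e' = true} with hbd
  -- elements of B are not in the cluster
  have hBnC : ∀ b ∈ B, b ∉ C := by
    intro b hb hbC
    obtain ⟨a, ha, w, hsup, hed⟩ := hbC
    exact hnc ⟨a, ha, b, hb, w.reverse,
      fun v hv => hsup v (by simpa [SimpleGraph.Walk.support_reverse] using hv),
      fun e he => hed e (by simpa [SimpleGraph.Walk.edges_reverse] using he)⟩
  -- cluster is contained in R
  have hCR : C ⊆ R := by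
    rintro x ⟨a, ha, w, hsup, -⟩
    exact hsup x w.start_mem_support
  -- A is contained in the cluster
  have hAC : A ⊆ C := by
    intro a ha
    exact ⟨a, ha, SimpleGraph.Walk.nil, by simp [hA ha], by simp⟩
  -- the canonical cutset is contained in the closed boundary
  have hFcbd : Fc ⊆ bd := by
    rintro e ⟨x, y, rfl, hxy, hxC, hyC, b, hb, wt, hwt⟩
    have hyR : y ∈ R := (hwt y wt.start_mem_support).1
    have hclosed : ω s(x, y) = false := by
      by_contra h
      have : ω s(x, y) = true := by simpa using h
      obtain ⟨a, ha, w, hsup, hed⟩ := hxC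
      exact hyC ⟨a, ha, SimpleGraph.Walk.cons hxy.symm w, by
        intro v hv
        rw [SimpleGraph.Walk.support_cons, List.mem_cons] at hv
        rcases hv with rfl | hv
        · exact hyR
        · exact hsup v hv, by
        intro e' he'
        rw [SimpleGraph.Walk.edges_cons, List.mem_cons] at he'
        rcases he' with rfl | he'
        · rwa [Sym2.eq_swap]
        · exact hed e' he'⟩
    refine ⟨hxy, ?_, hclosed, x, by simp, hxC⟩
    intro v hv
    rw [Sym2.mem_iff] at hv
    rcases hv with rfl | rfl
    · exact hCR hxC
    · exact hyR
  -- key: any walk from v to some b ∈ B inside R either avoids C entirely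
  -- or contains an edge of Fc
  have key : ∀ {v b : V} (w : G.Walk v b), b ∈ B → (∀ u ∈ w.support, u ∈ R) →
      (∀ u ∈ w.support, u ∉ C) ∨ (∃ e ∈ w.edges, e ∈ Fc) := by
    intro v b w
    induction w with
    | nil =>
      intro hb _
      left
      intro u hu
      rw [SimpleGraph.Walk.support_nil, List.mem_singleton] at hu
      subst hu
      exact hBnC _ hb
    | @cons v v' b hadj w ih =>
      intro hb hsup
      rcases ih hb (fun u hu => hsup u (by simp [hu])) with htail | ⟨e, he, heFc⟩
      · by_cases hvC : v ∈ C
        · right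
          exact ⟨s(v, v'), by simp, v, v', rfl, hadj, hvC, htail v' w.start_mem_support,
            b, hb, w, fun u hu => ⟨hsup u (by simp [hu]), htail u hu⟩⟩
        · left
          intro u hu
          rw [SimpleGraph.Walk.support_cons, List.mem_cons] at hu
          rcases hu with rfl | hu
          · exact hvC
          · exact htail u hu
      · right
        exact ⟨e, by simp [he], heFc⟩
  -- Fc is a cutset
  have hcut : ∀ a ∈ A, ∀ b ∈ B, ∀ w : G.Walk a b, (∀ v ∈ w.support, v ∈ R) →
      ∃ e ∈ w.edges, e ∈ Fc := by
    intro a ha b hb w hsup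
    rcases key w hb hsup with h | h
    · exact absurd (hAC ha) (h a w.start_mem_support)
    · exact h
  -- for each e ∈ Fc, a witness walk through e only meeting bd at e
  have hwitness : ∀ e ∈ Fc, ∃ a ∈ A, ∃ b ∈ B, ∃ w : G.Walk a b,
      (∀ v ∈ w.support, v ∈ R) ∧ e ∈ w.edges ∧ ∀ e' ∈ w.edges, e' ∈ bd → e' = e := by
    rintro e ⟨x, y, rfl, hxy, hxC, hyC, b, hb, wt, hwt⟩
    obtain ⟨a, ha, wo, hosup, hoed⟩ := hxC
    refine ⟨a, ha, b, hb, wo.reverse.append (SimpleGraph.Walk.cons hxy wt), ?_, ?_, ?_⟩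
    · intro v hv
      rw [SimpleGraph.Walk.mem_support_append_iff] at hv
      rcases hv with hv | hv
      · exact hosup v (by simpa [SimpleGraph.Walk.support_reverse] using hv)
      · rw [SimpleGraph.Walk.support_cons, List.mem_cons] at hv
        rcases hv with rfl | hv
        · exact hosup _ wo.start_mem_support
        · exact (hwt v hv).1
    · simp [SimpleGraph.Walk.edges_append]
    · intro e' he' hbd'
      rw [SimpleGraph.Walk.edges_append] at he'
      rcases List.mem_append.mp he' with he' | he'
      · -- open edges are not closed
        have : ω e' = true := hoed e' (by simpa [SimpleGraph.Walk.edges_reverse] using he')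
        rw [hbd'.2.2.1] at this
        simp at this
      · rw [SimpleGraph.Walk.edges_cons, List.mem_cons] at he'
        rcases he' with rfl | he'
        · rfl
        · -- tail edges have no endpoint in the cluster
          obtain ⟨z, hz, az, haz, wz, hwz⟩ := hbd'.2.2.2
          have hzC : z ∈ C := ⟨az, haz, wz, hwz⟩
          exact absurd hzC (hwt z (stmt3_mem_support wt he' hz)).2
  refine ⟨Fc, ⟨hFcbd, hcut, ?_⟩, ?_⟩
  · -- minimality
    rintro F' ⟨hsub, hne⟩ hcut'
    obtain ⟨e, heFc, heF'⟩ := Set.not_subset.mp hne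
    obtain ⟨a, ha, b, hb, w, hsup, hew, huniq⟩ := hwitness e heFc
    obtain ⟨e', he', he'F'⟩ := hcut' a ha b hb w hsup
    have : e' = e := huniq e' he' (hFcbd (hsub he'F'))
    exact heF' (this ▸ he'F')
  · -- uniqueness
    rintro F ⟨hFbd, hFcut, hFmin⟩
    have hFcF : Fc ⊆ F := by
      intro e heFc
      obtain ⟨a, ha, b, hb, w, hsup, hew, huniq⟩ := hwitness e heFc
      obtain ⟨e', he', he'F⟩ := hFcut a ha b hb w hsup
      rwa [← huniq e' he' (hFbd he'F)]
    by_contra hne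
    exact hFmin Fc ⟨hFcF, fun h => hne (Set.Subset.antisymm h hFcF)⟩ hcut
end

section
/- Let G be a graph, x₀ a vertex, and S, T two sets of vertices. Let Γ_S (resp. Γ_T) be the set of all paths in G from x₀ to S (resp. to T), and let I = { u : u lies on γ ∩ γ' for every γ ∈ Γ_T and every γ' ∈ Γ_S }. For u, u' ∈ I and a path γ ∈ Γ_S ∪ Γ_T containing both, write u ≤_γ u' if u occurs no later than u' along γ (starting from x₀). Then the relation is independent of the path: if u ≤_γ u' for some γ ∈ Γ_S ∪ Γ_T, then u ≤_{γ'} u' for every γ' ∈ Γ_S ∪ Γ_T containing both u and u'. Consequently ≤_I is a well-defined total order on I. -/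
/-!
If `u` comes no later than `u'` on one path from `x₀` but strictly after `u'` on a path `γ'`,
then following the first path up to `u` and `γ'` from `u` onwards gives a walk to the end of `γ'`
that misses `u'`; shortening it to a path contradicts `u'` lying on every such path.
-/

namespace List

theorem Nodup.le_idxOf_of_mem_drop {α : Type*} [BEq α] [LawfulBEq α] {l : List α} (hl : l.Nodup)
    {n : ℕ} {a : α} (ha : a ∈ l.drop n) : n ≤ l.idxOf a := by
  obtain ⟨j, hj, rfl⟩ := mem_drop_iff_getElem.1 ha
  rw [hl.idxOf_getElem]
  omega

end List

namespace SimpleGraph.Walk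

variable {V : Type*} [DecidableEq V] {G : SimpleGraph V} {a b c u u' x : V}

theorem mem_support_takeUntil_iff (p : G.Walk a b) (hu : u ∈ p.support) (hx : x ∈ p.support) :
    x ∈ (p.takeUntil u hu).support ↔ p.support.idxOf x ≤ p.support.idxOf u := by
  rw [takeUntil_eq_take, support_copy, support_take, List.mem_take_iff_idxOf_lt hx,
    Nat.lt_succ_iff]

theorem IsPath.idxOf_le_of_mem_support_dropUntil {p : G.Walk a b} (hp : p.IsPath)
    (hu : u ∈ p.support) (hx : x ∈ (p.dropUntil u hu).support) :
    p.support.idxOf u ≤ p.support.idxOf x := by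
  rw [dropUntil_eq_drop, support_copy, drop_support_eq_support_drop_min] at hx
  have hlen : p.support.idxOf u ≤ p.length := by
    have := List.idxOf_lt_length_iff.2 hu
    rw [length_support] at this
    omega
  rw [min_eq_left hlen] at hx
  exact hp.support_nodup.le_idxOf_of_mem_drop hx

theorem exists_isPath_notMem_support_of_idxOf_lt {γ : G.Walk a b} {γ' : G.Walk a c}
    (hγ' : γ'.IsPath) (hu : u ∈ γ.support) (hu' : u ∈ γ'.support)
    (hle : γ.support.idxOf u ≤ γ.support.idxOf u')
    (hlt : γ'.support.idxOf u' < γ'.support.idxOf u) :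
    ∃ p : G.Walk a c, p.IsPath ∧ u' ∉ p.support := by
  have hne : u ≠ u' := by rintro rfl; omega
  have h_take : u' ∉ (γ.takeUntil u hu).support := fun h => by
    have hu'γ := γ.support_takeUntil_subset_support hu h
    have heq := le_antisymm ((γ.mem_support_takeUntil_iff hu hu'γ).1 h) hle
    exact hne ((List.idxOf_inj hu'γ).1 heq).symm
  have h_drop : u' ∉ (γ'.dropUntil u hu').support := fun h =>
    (hγ'.idxOf_le_of_mem_support_dropUntil hu' h).not_gt hlt
  let w := (γ.takeUntil u hu).append (γ'.dropUntil u hu')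
  have hw : u' ∉ w.support := by
    rw [mem_support_append_iff]
    exact not_or_intro h_take h_drop
  exact ⟨w.bypass, w.bypass_isPath, fun h => hw (w.support_bypass_subset_support h)⟩

theorem idxOf_le_idxOf_of_forall_isPath_mem_support {γ : G.Walk a b} {γ' : G.Walk a c}
    (hγ' : γ'.IsPath) (hu : u ∈ γ.support) (hu' : u ∈ γ'.support)
    (hu'_mem : ∀ p : G.Walk a c, p.IsPath → u' ∈ p.support)
    (hle : γ.support.idxOf u ≤ γ.support.idxOf u') :
    γ'.support.idxOf u ≤ γ'.support.idxOf u' := by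
  by_contra! hlt
  obtain ⟨p, hp, hu'p⟩ := exists_isPath_notMem_support_of_idxOf_lt hγ' hu hu' hle hlt
  exact hu'p (hu'_mem p hp)

end SimpleGraph.Walk

open SimpleGraph

/-- The ordering along a path of the "mandatory" vertices `I` (vertices lying on
every path from `x₀` to `S` and on every path from `x₀` to `T`) does not depend
on the chosen path from `Γ_S ∪ Γ_T`; consequently it defines a total order. -/
theorem stmt5 {V : Type*} [DecidableEq V] (G : SimpleGraph V) (x₀ : V) (S T : Set V)
    (I : Set V)
    (hI : I = {u : V |
      (∀ v ∈ S, ∀ w : G.Walk x₀ v, w.IsPath → u ∈ w.support) ∧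
      (∀ v ∈ T, ∀ w : G.Walk x₀ v, w.IsPath → u ∈ w.support)}) :
    -- independence of the path: if `u` comes no later than `u'` on some path of
    -- `Γ_S ∪ Γ_T`, then the same holds on every path of `Γ_S ∪ Γ_T`
    (∀ u ∈ I, ∀ u' ∈ I, ∀ v ∈ S ∪ T, ∀ v' ∈ S ∪ T,
      ∀ (γ : G.Walk x₀ v) (γ' : G.Walk x₀ v'), γ.IsPath → γ'.IsPath →
        γ.support.idxOf u ≤ γ.support.idxOf u' →
        γ'.support.idxOf u ≤ γ'.support.idxOf u') ∧
    -- totality of the resulting relation `≤_I` on `I`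
    (∀ u ∈ I, ∀ u' ∈ I,
      (∀ v ∈ S ∪ T, ∀ γ : G.Walk x₀ v, γ.IsPath →
        γ.support.idxOf u ≤ γ.support.idxOf u') ∨
      (∀ v ∈ S ∪ T, ∀ γ : G.Walk x₀ v, γ.IsPath →
        γ.support.idxOf u' ≤ γ.support.idxOf u)) := by
  have mem_support_of_mem_I : ∀ u ∈ I, ∀ v ∈ S ∪ T, ∀ γ : G.Walk x₀ v, γ.IsPath →
      u ∈ γ.support := by
    subst hI
    rintro u ⟨hS, hT⟩ v (hv | hv)
    exacts [hS v hv, hT v hv]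
  have order_indep : ∀ u ∈ I, ∀ u' ∈ I, ∀ v ∈ S ∪ T, ∀ v' ∈ S ∪ T,
      ∀ (γ : G.Walk x₀ v) (γ' : G.Walk x₀ v'), γ.IsPath → γ'.IsPath →
        γ.support.idxOf u ≤ γ.support.idxOf u' →
        γ'.support.idxOf u ≤ γ'.support.idxOf u' :=
    fun u hu u' hu' v hv v' hv' γ γ' hγ hγ' hle =>
      Walk.idxOf_le_idxOf_of_forall_isPath_mem_support hγ'
        (mem_support_of_mem_I u hu v hv γ hγ) (mem_support_of_mem_I u hu v' hv' γ' hγ')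
        (mem_support_of_mem_I u' hu' v' hv') hle
  refine ⟨order_indep, fun u hu u' hu' => ?_⟩
  by_cases! h : ∀ v ∈ S ∪ T, ∀ γ : G.Walk x₀ v, γ.IsPath →
      γ.support.idxOf u ≤ γ.support.idxOf u'
  · exact .inl h
  · obtain ⟨v, hv, γ, hγ, hlt⟩ := h
    exact .inr fun v' hv' γ' hγ' => order_indep u' hu' u hu v hv v' hv' γ γ' hγ hγ' hlt.le
end
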